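/- arXiv:2302.13461 — 3 statements merged into one kernel-verified Lean document; each statement's English description precedes it below -/
import Mathlib

section
/- Let m ≡ 7 (mod 12) with m ≥ 7, n = 2^m - 1, and v = 2^((m+1)/2) - 1. Then gcd(v, n) = 1, and for every integer a with 1 ≤ a ≤ 2^((m-1)/2), the binary digit sum of (a·v mod n) is congruent to 0, 4, or 5 modulo 6. -/
/-!
With `t = (m + 1) / 2` and `s = (m - 1) / 2`, every `a ≤ 2 ^ s` has `a * (2 ^ t - 1) < 2 ^ m - 1`,
so the reduction mod `n` does nothing. Writing
`a * (2 ^ t - 1) = 2 ^ t * (a - 1) + (2 ^ t - 1 - (a - 1))` shows that the binary expansion is that of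
`a - 1` on top of a `t`-digit block holding the bitwise complement of `a - 1`, so the digit sum is
exactly `t ≡ 4 (mod 6)`. Coprimality is `gcd (2 ^ t - 1) (2 ^ m - 1) = 2 ^ gcd t m - 1` with `2 t - m = 1`.
-/

namespace Nat

variable {b : ℕ}

theorem digits_sum_add_mul (hb : 1 < b) {r : ℕ} (hr : r < b) (q : ℕ) :
    (digits b (r + b * q)).sum = r + (digits b q).sum := by
  by_cases h0 : r = 0 ∧ q = 0
  · simp [h0.1, h0.2]
  · rw [digits_add b hb r q hr (not_and_or.mp h0), List.sum_cons]

theorem exists_eq_mod_add_mul_of_lt_pow_succ (hb : 1 < b) {t x : ℕ} (hx : x < b ^ (t + 1)) :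
    ∃ r q, r < b ∧ q < b ^ t ∧ x = r + b * q := by
  refine ⟨x % b, x / b, Nat.mod_lt x (by omega), ?_, (Nat.mod_add_div x b).symm⟩
  exact Nat.div_lt_of_lt_mul (by rwa [pow_succ'] at hx)

theorem digits_sum_mul_pow_add (hb : 1 < b) (u : ℕ) :
    ∀ {t r : ℕ}, r < b ^ t → (digits b (b ^ t * u + r)).sum = (digits b u).sum + (digits b r).sum
  | 0, r, hr => by simp_all
  | t + 1, _, hlt => by
    obtain ⟨r, q, hr, hq, rfl⟩ := exists_eq_mod_add_mul_of_lt_pow_succ hb hlt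
    have hsplit : b ^ (t + 1) * u + (r + b * q) = r + b * (b ^ t * u + q) := by ring
    rw [hsplit, digits_sum_add_mul hb hr, digits_sum_mul_pow_add hb u hq,
      digits_sum_add_mul hb hr]
    ring

theorem digits_sum_add_digits_sum_pow_sub_one_sub (hb : 1 < b) :
    ∀ {t x : ℕ}, x < b ^ t → (digits b x).sum + (digits b (b ^ t - 1 - x)).sum = t * (b - 1)
  | 0, x, hx => by simp_all
  | t + 1, _, hlt => by
    obtain ⟨r, q, hr, hq, rfl⟩ := exists_eq_mod_add_mul_of_lt_pow_succ hb hlt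
    obtain ⟨k, hk⟩ : ∃ k, b ^ t = q + 1 + k := ⟨b ^ t - (q + 1), by omega⟩
    have hcompl : b ^ (t + 1) - 1 - (r + b * q) = (b - 1 - r) + b * (b ^ t - 1 - q) := by
      rw [pow_succ', hk, show q + 1 + k - 1 - q = k by omega, Nat.mul_add, Nat.mul_add]
      omega
    have ih := digits_sum_add_digits_sum_pow_sub_one_sub hb hq
    rw [hcompl, digits_sum_add_mul hb hr, digits_sum_add_mul hb (by omega), Nat.succ_mul]
    omega

theorem digits_sum_mul_pow_sub_one (hb : 1 < b) {t a : ℕ} (ha : 1 ≤ a) (hat : a ≤ b ^ t) :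
    (digits b (a * (b ^ t - 1))).sum = t * (b - 1) := by
  obtain ⟨c, rfl⟩ : ∃ c, a = c + 1 := ⟨a - 1, by omega⟩
  obtain ⟨k, hk⟩ : ∃ k, b ^ t = c + 1 + k := ⟨b ^ t - (c + 1), by omega⟩
  have hsplit : (c + 1) * (b ^ t - 1) = b ^ t * c + (b ^ t - 1 - c) := by
    rw [hk, show c + 1 + k - 1 = c + k by omega, show c + k - c = k by omega]
    ring
  rw [hsplit, digits_sum_mul_pow_add hb c (by omega),
    digits_sum_add_digits_sum_pow_sub_one_sub hb (by omega)]

end Nat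

theorem m7mod12_defSet_general (m : ℕ) (h : m % 12 = 7) :
    Nat.gcd (2 ^ ((m + 1) / 2) - 1) (2 ^ m - 1) = 1 ∧
    ∀ a : ℕ, 1 ≤ a → a ≤ 2 ^ ((m - 1) / 2) →
      (Nat.digits 2 (a * (2 ^ ((m + 1) / 2) - 1) % (2 ^ m - 1))).sum % 6 = 0 ∨
      (Nat.digits 2 (a * (2 ^ ((m + 1) / 2) - 1) % (2 ^ m - 1))).sum % 6 = 4 ∨
      (Nat.digits 2 (a * (2 ^ ((m + 1) / 2) - 1) % (2 ^ m - 1))).sum % 6 = 5 := by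
  set t := (m + 1) / 2
  set s := (m - 1) / 2
  have hm : s + t = m := by omega
  constructor
  · have hcop : Nat.gcd t m = 1 := by
      have hdvd := Nat.dvd_sub (dvd_mul_of_dvd_right (Nat.gcd_dvd_left t m) 2)
        (Nat.gcd_dvd_right t m)
      rwa [show 2 * t - m = 1 by omega, Nat.dvd_one] at hdvd
    rw [Nat.pow_sub_one_gcd_pow_sub_one, hcop, pow_one]
  · intro a ha has
    have hlt : a * (2 ^ t - 1) < 2 ^ m - 1 := calc
      a * (2 ^ t - 1) ≤ 2 ^ s * (2 ^ t - 1) := Nat.mul_le_mul_right _ has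
      _ = 2 ^ m - 2 ^ s := by rw [Nat.mul_sub, ← pow_add, hm, mul_one]
      _ < 2 ^ m - 1 := by
        have := Nat.one_lt_two_pow (show s ≠ 0 by omega)
        have := Nat.pow_le_pow_right two_pos (show s ≤ m by omega)
        omega
    have hat : a ≤ 2 ^ t := has.trans (Nat.pow_le_pow_right two_pos (by omega))
    rw [Nat.mod_eq_of_lt hlt, Nat.digits_sum_mul_pow_sub_one one_lt_two ha hat]
    omega

theorem m7mod12_defSet (m : ℕ) (hm : 7 ≤ m) (h : m % 12 = 7) :
    Nat.gcd (2 ^ ((m + 1) / 2) - 1) (2 ^ m - 1) = 1 ∧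
    ∀ a : ℕ, 1 ≤ a → a ≤ 2 ^ ((m - 1) / 2) →
      (Nat.digits 2 (a * (2 ^ ((m + 1) / 2) - 1) % (2 ^ m - 1))).sum % 6 = 0 ∨
      (Nat.digits 2 (a * (2 ^ ((m + 1) / 2) - 1) % (2 ^ m - 1))).sum % 6 = 4 ∨
      (Nat.digits 2 (a * (2 ^ ((m + 1) / 2) - 1) % (2 ^ m - 1))).sum % 6 = 5 :=
  m7mod12_defSet_general m h
end

section
/- Let m ≡ 9 (mod 12) with m ≥ 9, n = 2^m - 1, and v = 2^((m+1)/2) - 1. Then gcd(v, n) = 1, and for every integer a with 1 ≤ a ≤ 2^((m-1)/2) + 2, the binary digit sum of (a·v mod n) is congruent to 0, 1, or 5 modulo 6. -/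
/-!
Write m = 2k + 1, so v = 2^(k+1) - 1 and n = 2^(2k+1) - 1. Then
gcd(v, n) = 2^gcd(k+1, 2k+1) - 1 = 1. For 1 ≤ a ≤ 2^k we have
a·v = (a - 1)·2^(k+1) + (2^(k+1) - 1 - (a - 1)) < n, and the two blocks of k + 1 bits are
complementary, so the binary weight is k + 1. For a = 2^k + 1 and a = 2^k + 2 the
product reduces modulo n to 2^k and to 2^(k+1) + (2^k - 1), of weights 1 and k + 1. Finally
m ≡ 9 (mod 12) gives k + 1 ≡ 5 (mod 6).
-/

namespace Nat

variable {b : ℕ}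

theorem digits_sum_eq_mod_add_digits_sum_div (hb : 1 < b) (x : ℕ) :
    (digits b x).sum = x % b + (digits b (x / b)).sum := by
  rcases x.eq_zero_or_pos with rfl | hx
  · simp
  · rw [digits_def' hb hx, List.sum_cons]

theorem digits_sum_add_base_pow_mul (hb : 1 < b) {h x : ℕ} (hx : x < b ^ h) (y : ℕ) :
    (digits b (x + b ^ h * y)).sum = (digits b x).sum + (digits b y).sum := by
  rcases y.eq_zero_or_pos with rfl | hy
  · simp
  obtain ⟨j, hj⟩ : ∃ j, h = (digits b x).length + j :=
    Nat.exists_eq_add_of_le ((digits_length_le_iff hb x).2 hx)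
  rw [hj, ← digits_append_zeroes_append_digits hb hy]
  simp

theorem digits_sum_add_digits_sum_base_pow_sub_one_sub (hb : 1 < b) {h x : ℕ} (hx : x < b ^ h) :
    (digits b x).sum + (digits b (b ^ h - 1 - x)).sum = h * (b - 1) := by
  induction h generalizing x with
  | zero => simp_all
  | succ h ih =>
    obtain ⟨q, r, hr, rfl⟩ : ∃ q r, r < b ∧ x = r + b * q :=
      ⟨x / b, x % b, mod_lt x (by omega), (mod_add_div x b).symm⟩
    have hq : q < b ^ h := by
      rw [pow_succ'] at hx
      nlinarith
    have hsplit : b ^ (h + 1) - 1 - (r + b * q) = (b - 1 - r) + b * (b ^ h - 1 - q) := by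
      obtain ⟨c, hc⟩ := Nat.exists_eq_add_of_lt hq
      rw [pow_succ', hc, show q + c + 1 - 1 - q = c by omega, mul_add, mul_add, mul_one]
      omega
    rw [digits_sum_eq_mod_add_digits_sum_div hb,
      digits_sum_eq_mod_add_digits_sum_div hb (_ - _ - _), hsplit,
      add_mul_div_left _ _ (by omega), add_mul_div_left _ _ (by omega),
      div_eq_of_lt hr, div_eq_of_lt (by omega), add_mul_mod_self_left, add_mul_mod_self_left,
      mod_eq_of_lt hr, mod_eq_of_lt (by omega), zero_add, zero_add]
    have := ih hq
    rw [add_mul, one_mul]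
    omega

theorem digits_sum_base_pow (hb : 1 < b) (k : ℕ) : (digits b (b ^ k)).sum = 1 := by
  simpa [digits_of_lt b 1 one_ne_zero hb] using
    digits_sum_add_base_pow_mul hb (pow_pos (zero_lt_of_lt hb) k) 1

theorem digits_sum_base_pow_sub_one (hb : 1 < b) (k : ℕ) :
    (digits b (b ^ k - 1)).sum = k * (b - 1) := by
  simpa using digits_sum_add_digits_sum_base_pow_sub_one_sub hb (pow_pos (zero_lt_of_lt hb) k)

end Nat

open Nat

section MersenneMultiples

variable {k : ℕ}

theorem two_pow_two_mul_add_one (k : ℕ) : 2 ^ (2 * k + 1) = 2 * 2 ^ k * 2 ^ k := by ring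

theorem digits_sum_mul_mod_of_le_two_pow (hk : k ≠ 0) {a : ℕ} (ha₁ : 1 ≤ a)
    (ha₂ : a ≤ 2 ^ k) :
    (digits 2 (a * (2 ^ (k + 1) - 1) % (2 ^ (2 * k + 1) - 1))).sum = k + 1 := by
  have h2k : 1 < 2 ^ k := Nat.one_lt_two_pow hk
  have hprod : a * (2 ^ (k + 1) - 1) = (2 ^ (k + 1) - 1 - (a - 1)) + 2 ^ (k + 1) * (a - 1) := by
    rw [pow_succ]
    zify [ha₁, show 1 ≤ 2 ^ k * 2 by omega, show a - 1 ≤ 2 ^ k * 2 - 1 by omega]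
    ring
  have hlt : a * (2 ^ (k + 1) - 1) < 2 ^ (2 * k + 1) - 1 := by
    calc a * (2 ^ (k + 1) - 1) ≤ 2 ^ k * (2 ^ (k + 1) - 1) := Nat.mul_le_mul_right _ ha₂
      _ < 2 ^ (2 * k + 1) - 1 := by
        rw [two_pow_two_mul_add_one, pow_succ, Nat.mul_sub, mul_one]
        have : 2 ≤ 2 ^ k * (2 ^ k * 2) := by nlinarith
        rw [show 2 * 2 ^ k * 2 ^ k = 2 ^ k * (2 ^ k * 2) by ring]
        omega
  have hsmall : a - 1 < 2 ^ (k + 1) := by rw [pow_succ]; omega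
  rw [Nat.mod_eq_of_lt hlt, hprod, digits_sum_add_base_pow_mul one_lt_two (by omega),
    add_comm, digits_sum_add_digits_sum_base_pow_sub_one_sub one_lt_two hsmall]
  simp

theorem digits_sum_mul_mod_two_pow_add_one (hk : k ≠ 0) :
    (digits 2 ((2 ^ k + 1) * (2 ^ (k + 1) - 1) % (2 ^ (2 * k + 1) - 1))).sum = 1 := by
  have h2k : 1 < 2 ^ k := Nat.one_lt_two_pow hk
  have hprod : (2 ^ k + 1) * (2 ^ (k + 1) - 1) = (2 ^ (2 * k + 1) - 1) + 2 ^ k := by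
    rw [two_pow_two_mul_add_one, pow_succ]
    zify [show 1 ≤ 2 ^ k * 2 by omega, show 1 ≤ 2 * 2 ^ k * 2 ^ k by nlinarith]
    ring
  have hlt : 2 ^ k < 2 ^ (2 * k + 1) - 1 := by
    have : 4 * 2 ^ k ≤ 2 * 2 ^ k * 2 ^ k := by nlinarith
    rw [two_pow_two_mul_add_one]
    omega
  rw [hprod, Nat.add_mod_left, Nat.mod_eq_of_lt hlt, digits_sum_base_pow one_lt_two]

theorem digits_sum_mul_mod_two_pow_add_two (hk : k ≠ 0) :
    (digits 2 ((2 ^ k + 2) * (2 ^ (k + 1) - 1) % (2 ^ (2 * k + 1) - 1))).sum = k + 1 := by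
  have h2k : 1 < 2 ^ k := Nat.one_lt_two_pow hk
  have hprod : (2 ^ k + 2) * (2 ^ (k + 1) - 1) =
      (2 ^ (2 * k + 1) - 1) + ((2 ^ k - 1) + 2 ^ (k + 1) * 1) := by
    rw [two_pow_two_mul_add_one, pow_succ]
    zify [show 1 ≤ 2 ^ k by omega, show 1 ≤ 2 ^ k * 2 by omega,
      show 1 ≤ 2 * 2 ^ k * 2 ^ k by nlinarith]
    ring
  have hlt : (2 ^ k - 1) + 2 ^ (k + 1) * 1 < 2 ^ (2 * k + 1) - 1 := by
    have : 4 * 2 ^ k ≤ 2 * 2 ^ k * 2 ^ k := by nlinarith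
    rw [two_pow_two_mul_add_one, pow_succ]
    omega
  rw [hprod, Nat.add_mod_left, Nat.mod_eq_of_lt hlt,
    digits_sum_add_base_pow_mul one_lt_two (by rw [pow_succ]; omega),
    digits_sum_base_pow_sub_one one_lt_two, digits_of_lt 2 1 one_ne_zero one_lt_two]
  simp

theorem digits_sum_mul_mod_eq_succ_or_eq_one (hk : k ≠ 0) {a : ℕ} (ha₁ : 1 ≤ a)
    (ha₂ : a ≤ 2 ^ k + 2) :
    (digits 2 (a * (2 ^ (k + 1) - 1) % (2 ^ (2 * k + 1) - 1))).sum = k + 1 ∨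
      (digits 2 (a * (2 ^ (k + 1) - 1) % (2 ^ (2 * k + 1) - 1))).sum = 1 := by
  rcases (by omega : a ≤ 2 ^ k ∨ a = 2 ^ k + 1 ∨ a = 2 ^ k + 2) with ha | rfl | rfl
  · exact .inl (digits_sum_mul_mod_of_le_two_pow hk ha₁ ha)
  · exact .inr (digits_sum_mul_mod_two_pow_add_one hk)
  · exact .inl (digits_sum_mul_mod_two_pow_add_two hk)

theorem coprime_two_pow_succ_sub_one_two_pow_two_mul_add_one_sub_one (k : ℕ) :
    Nat.Coprime (2 ^ (k + 1) - 1) (2 ^ (2 * k + 1) - 1) := by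
  rw [Nat.Coprime, pow_sub_one_gcd_pow_sub_one, show 2 * k + 1 = k + (k + 1) by ring,
    gcd_add_self_right]
  simp

end MersenneMultiples

theorem m9mod12_defSet_general (m : ℕ) (h : m % 12 = 9) :
    Nat.gcd (2 ^ ((m + 1) / 2) - 1) (2 ^ m - 1) = 1 ∧
    ∀ a : ℕ, 1 ≤ a → a ≤ 2 ^ ((m - 1) / 2) + 2 →
      (Nat.digits 2 (a * (2 ^ ((m + 1) / 2) - 1) % (2 ^ m - 1))).sum % 6 = 0 ∨
      (Nat.digits 2 (a * (2 ^ ((m + 1) / 2) - 1) % (2 ^ m - 1))).sum % 6 = 1 ∨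
      (Nat.digits 2 (a * (2 ^ ((m + 1) / 2) - 1) % (2 ^ m - 1))).sum % 6 = 5 := by
  obtain ⟨k, rfl⟩ : ∃ k, m = 2 * k + 1 := ⟨m / 2, by omega⟩
  rw [show (2 * k + 1 + 1) / 2 = k + 1 by omega, show (2 * k + 1 - 1) / 2 = k by omega]
  refine ⟨coprime_two_pow_succ_sub_one_two_pow_two_mul_add_one_sub_one k,
    fun a ha₁ ha₂ => ?_⟩
  rcases digits_sum_mul_mod_eq_succ_or_eq_one (by omega) ha₁ ha₂ with hs | hs <;> omega

theorem m9mod12_defSet (m : ℕ) (hm : 9 ≤ m) (h : m % 12 = 9) :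
    Nat.gcd (2 ^ ((m + 1) / 2) - 1) (2 ^ m - 1) = 1 ∧
    ∀ a : ℕ, 1 ≤ a → a ≤ 2 ^ ((m - 1) / 2) + 2 →
      (Nat.digits 2 (a * (2 ^ ((m + 1) / 2) - 1) % (2 ^ m - 1))).sum % 6 = 0 ∨
      (Nat.digits 2 (a * (2 ^ ((m + 1) / 2) - 1) % (2 ^ m - 1))).sum % 6 = 1 ∨
      (Nat.digits 2 (a * (2 ^ ((m + 1) / 2) - 1) % (2 ^ m - 1))).sum % 6 = 5 :=
  m9mod12_defSet_general m h
end

section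
/- Let m ≡ 1 (mod 6) with m ≥ 7 and n = 2^m - 1. Define S = {0,4,5} ⊆ Z/6Z, T_S = { i : 1 ≤ i ≤ n-1, w₂(i) mod 6 ∈ S } and T_S̄ = { i : 1 ≤ i ≤ n-1, w₂(i) mod 6 ∈ {1,2,3} }. Then T_S = { n - i : i ∈ T_S̄ }, T_S ∩ T_S̄ = ∅, and T_S ∪ T_S̄ = {1, 2, ..., n-1}. -/
private lemma sum_digits_two (n : ℕ) :
    (Nat.digits 2 n).sum = n % 2 + (Nat.digits 2 (n / 2)).sum := by
  rcases Nat.eq_zero_or_pos n with h | h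
  · simp [h]
  · rw [Nat.digits_def' (by norm_num) h]; simp

private lemma compl_sum : ∀ m i : ℕ, i < 2 ^ m →
    (Nat.digits 2 (2 ^ m - 1 - i)).sum + (Nat.digits 2 i).sum = m := by
  intro m
  induction m with
  | zero => intro i hi; interval_cases i; simp
  | succ m ih =>
    intro i hi
    have h2 : 2 ^ (m + 1) = 2 * 2 ^ m := by ring
    have hone : 1 ≤ 2 ^ m := Nat.one_le_two_pow
    have hb : i % 2 < 2 := Nat.mod_lt _ (by norm_num)
    have hiq : 2 * (i / 2) + i % 2 = i := Nat.div_add_mod i 2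
    have hq : i / 2 < 2 ^ m := by omega
    have hj : 2 ^ (m + 1) - 1 - i = 2 * (2 ^ m - 1 - i / 2) + (1 - i % 2) := by omega
    have e1 := sum_digits_two (2 * (2 ^ m - 1 - i / 2) + (1 - i % 2))
    have e2 := sum_digits_two i
    rw [Nat.mul_add_mod, Nat.mul_add_div (by norm_num)] at e1
    have hlt : (1 - i % 2) < 2 := by omega
    rw [Nat.mod_eq_of_lt hlt, Nat.div_eq_of_lt hlt] at e1
    have hih := ih (i / 2) hq
    rw [hj, e1, e2]
    simp only [Nat.add_zero] at *
    omega

theorem splitting_m1mod6 (m : ℕ) (hm : 7 ≤ m) (h : m % 6 = 1) :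
    let n := 2 ^ m - 1
    let TS : Set ℕ := {i | 1 ≤ i ∧ i ≤ n - 1 ∧
      ((Nat.digits 2 i).sum % 6 = 0 ∨ (Nat.digits 2 i).sum % 6 = 4 ∨
        (Nat.digits 2 i).sum % 6 = 5)}
    let TSbar : Set ℕ := {i | 1 ≤ i ∧ i ≤ n - 1 ∧
      ((Nat.digits 2 i).sum % 6 = 1 ∨ (Nat.digits 2 i).sum % 6 = 2 ∨
        (Nat.digits 2 i).sum % 6 = 3)}
    TS = (fun i => n - i) '' TSbar ∧ TS ∩ TSbar = ∅ ∧
      TS ∪ TSbar = {i | 1 ≤ i ∧ i ≤ n - 1} := by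
  intro n TS TSbar
  have hpow : 128 ≤ 2 ^ m := by
    calc (128 : ℕ) = 2 ^ 7 := by norm_num
    _ ≤ 2 ^ m := Nat.pow_le_pow_right (by norm_num) hm
  have hn : n = 2 ^ m - 1 := rfl
  have key : ∀ i, 1 ≤ i → i ≤ n - 1 →
      (Nat.digits 2 (n - i)).sum + (Nat.digits 2 i).sum = m := by
    intro i h1 h2
    have hi : i < 2 ^ m := by omega
    have hc := compl_sum m i hi
    have he : 2 ^ m - 1 - i = n - i := by omega
    rw [he] at hc
    omega
  refine ⟨?_, ?_, ?_⟩
  · ext i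
    simp only [TS, TSbar, Set.mem_setOf_eq, Set.mem_image]
    constructor
    · rintro ⟨h1, h2, h3⟩
      refine ⟨n - i, ⟨by omega, by omega, ?_⟩, by omega⟩
      have hk := key i h1 h2
      omega
    · rintro ⟨j, ⟨h1, h2, h3⟩, rfl⟩
      have hk := key j h1 h2
      refine ⟨by omega, by omega, by omega⟩
  · ext i
    simp only [TS, TSbar, Set.mem_inter_iff, Set.mem_setOf_eq, Set.mem_empty_iff_false,
      iff_false]
    rintro ⟨⟨_, _, h3⟩, ⟨_, _, h6⟩⟩
    omega
  · ext i
    simp only [TS, TSbar, Set.mem_union, Set.mem_setOf_eq]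
    constructor
    · rintro (⟨h1, h2, _⟩ | ⟨h1, h2, _⟩) <;> exact ⟨h1, h2⟩
    · rintro ⟨h1, h2⟩
      have : (Nat.digits 2 i).sum % 6 < 6 := Nat.mod_lt _ (by norm_num)
      omega
end
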